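/- For every even natural number k ≥ 2 there exists a unitary 2 × 2 complex matrix U (an element of the unitary group of Matrix (Fin 2) (Fin 2) ℂ) with the following property. Identify Fin 4 with Fin 2 × Fin 2 via (b₁, b₂) ↦ 2·b₁ + b₂, and let W : Matrix (Fin 4) (Fin 4) ℂ be W_{(a₁,a₂),(b₁,b₂)} = (if a₁ = b₁ then 1 else 0) · U_{a₂ b₂}, i.e. W = I₂ ⊗ U. Let γ_k : (Fin k → Fin 4) → ℂ be the GHZ amplitude function with γ_k(z) = (√2)⁻¹ if z is constantly 0 or constantly 1, and γ_k(z) = 0 otherwise. Then the vector φ = W^{⊗k} γ_k, defined by φ(z) = ∑_{w : Fin k → Fin 4} (∏_{i : Fin k} W (z i) (w i)) · γ_k(w), satisfies φ(z) = 0 for every constant string z (every z such that z i = z j for all i, j). -/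

import Mathlib

/-- High bit of `a : Fin 4` under the identification `(b₁, b₂) ↦ 2·b₁ + b₂`. -/
def hiBit (a : Fin 4) : Fin 2 := ⟨a.val / 2, by have := a.isLt; omega⟩

/-- Low bit of `a : Fin 4` under the identification `(b₁, b₂) ↦ 2·b₁ + b₂`. -/
def loBit (a : Fin 4) : Fin 2 := ⟨a.val % 2, by have := a.isLt; omega⟩

/-- `W = I₂ ⊗ U` on `ℂ⁴ = ℂ² ⊗ ℂ²`. -/
noncomputable def idTensor (U : Matrix (Fin 2) (Fin 2) ℂ) : Matrix (Fin 4) (Fin 4) ℂ :=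
  fun a b => (if hiBit a = hiBit b then 1 else 0) * U (loBit a) (loBit b)

/-- Amplitude function of the `k`-partite GHZ state over `|0̂⟩, |1̂⟩`
(basis labels in `Fin 4`). -/
noncomputable def ghzAmp (k : ℕ) (z : Fin k → Fin 4) : ℂ :=
  if (∀ i, z i = 0) ∨ (∀ i, z i = 1) then (Real.sqrt 2 : ℂ)⁻¹ else 0

/-- For every even `k ≥ 2` there is a `2 × 2` unitary `U` such that `(I₂ ⊗ U)^{⊗k}` maps
the `k`-partite GHZ state to a superposition supported entirely on non-constant strings. -/
theorem stmt2 (k : ℕ) (hk : 2 ≤ k) (hke : Even k) :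
    ∃ U : Matrix.unitaryGroup (Fin 2) ℂ,
      ∀ z : Fin k → Fin 4, (∀ i j, z i = z j) →
        (∑ w : Fin k → Fin 4,
            (∏ i, idTensor (U : Matrix (Fin 2) (Fin 2) ℂ) (z i) (w i)) * ghzAmp k w) = 0 := by
  have hk0 : (k : ℂ) ≠ 0 := Nat.cast_ne_zero.mpr (by omega)
  set ζ : ℂ := Complex.exp (Real.pi * Complex.I / k) with hζdef
  have hζk : ζ ^ k = -1 := by
    rw [hζdef, ← Complex.exp_nat_mul,
      show (k : ℂ) * (Real.pi * Complex.I / k) = Real.pi * Complex.I by field_simp]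
    exact Complex.exp_pi_mul_I
  have hconj : (starRingEnd ℂ) ζ = Complex.exp (-(Real.pi * Complex.I / k)) := by
    rw [hζdef, ← Complex.exp_conj]
    congr 1
    simp [map_div₀, Complex.conj_I]
    ring
  have hζζ : ζ * (starRingEnd ℂ) ζ = 1 := by
    rw [hconj, hζdef, ← Complex.exp_add, add_neg_cancel, Complex.exp_zero]
  set s : ℂ := (Real.sqrt 2 : ℂ)⁻¹ with hsdef
  have hs2 : s * s = 2⁻¹ := by
    rw [hsdef, ← mul_inv]
    rw [← Complex.ofReal_mul, Real.mul_self_sqrt (by norm_num)]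
    norm_num
  have hcs : (starRingEnd ℂ) s = s := by
    rw [hsdef]; simp [map_inv₀, Complex.conj_ofReal]
  have key : s * (ζ * s * (starRingEnd ℂ) ζ) = 2⁻¹ := by
    rw [show s * (ζ * s * (starRingEnd ℂ) ζ) = (s * s) * (ζ * (starRingEnd ℂ) ζ) by ring,
      hs2, hζζ, mul_one]
  set U : Matrix (Fin 2) (Fin 2) ℂ := s • !![1, ζ; (starRingEnd ℂ) ζ, -1] with hUdef
  have hU : U ∈ Matrix.unitaryGroup (Fin 2) ℂ := by
    rw [Matrix.mem_unitaryGroup_iff']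
    ext i j
    fin_cases i <;> fin_cases j <;>
      simp [hUdef, Matrix.mul_apply, Fin.sum_univ_two, Matrix.star_apply, mul_comm,
        mul_left_comm, hζζ, hs2, hcs, key] <;> norm_num
  refine ⟨⟨U, hU⟩, ?_⟩
  intro z hz
  -- split the GHZ amplitude
  have hkpos : 0 < k := by omega
  have i0 : Fin k := ⟨0, hkpos⟩
  have hghz : ∀ w : Fin k → Fin 4,
      ghzAmp k w = (if w = (fun _ => 0) then s else 0) + (if w = (fun _ => 1) then s else 0) := by
    intro w
    unfold ghzAmp
    by_cases h0 : w = (fun _ => 0)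
    · have : ¬ w = (fun _ => 1) := by
        intro h1; have := congrFun h0 i0; have h2 := congrFun h1 i0; rw [this] at h2; exact absurd h2 (by decide)
      simp [h0, this, funext_iff, hsdef]
      exact ⟨i0, i0.isLt⟩
    · by_cases h1 : w = (fun _ => 1)
      · simp [h0, h1, funext_iff, hsdef]
        exact ⟨i0, i0.isLt⟩
      · simp only [funext_iff] at h0 h1
        simp [h0, h1, funext_iff]
  simp only [hghz, mul_add, Finset.sum_add_distrib, mul_ite, mul_zero,
    Finset.sum_ite_eq' Finset.univ, Finset.mem_univ, if_true]
  obtain ⟨a, hza⟩ : ∃ a, ∀ i, z i = a := ⟨z i0, fun i => hz i i0⟩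
  have hW : ∀ b : Fin 4, (∏ i, idTensor U (z i) b) = idTensor U a b ^ k := by
    intro b
    rw [Finset.prod_congr rfl (fun i _ => by rw [hza i]), Finset.prod_const, Finset.card_univ,
      Fintype.card_fin]
  rw [hW, hW]
  have hUe : ∀ i j, U i j = s • !![1, ζ; (starRingEnd ℂ) ζ, -1] i j := fun i j => rfl
  have hkzero : (0 : ℂ) ^ k = 0 := zero_pow (by omega)
  have hconjk : ((starRingEnd ℂ) ζ) ^ k = -1 := by
    rw [← map_pow, hζk]; simp
  have hm1 : (-1 : ℂ) ^ k = 1 := hke.neg_one_pow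
  fin_cases a <;>
    simp [idTensor, hiBit, loBit, hUe, Fin.ext_iff, mul_pow, hζk, hconjk, hm1, hkzero,
      smul_eq_mul] <;>
    (try linear_combination ((Real.sqrt 2 : ℂ))⁻¹ * ((Real.sqrt 2 : ℂ))⁻¹ ^ k * hm1) <;> try ring
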